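/- arXiv:0708.1571 — 2 statements merged into one kernel-verified Lean document; each statement's English description precedes it below -/
import Mathlib

section
/- Let f = (m, n, k) be an integer form with m > 0, n < 0 and discriminant Δ = k² - 4mn not a perfect square. Then exactly one of A f = (m, m+n+k, k+2m) and B f = (m+n+k, n, k+2n) again satisfies (m' > 0 and n' < 0): A f does iff m + n + k < 0, and B f does iff m + n + k > 0 (and m + n + k ≠ 0 since Δ is not a square). -/
def opA (f : ℤ × ℤ × ℤ) : ℤ × ℤ × ℤ := (f.1, f.1 + f.2.1 + f.2.2, f.2.2 + 2 * f.1)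

def opB (f : ℤ × ℤ × ℤ) : ℤ × ℤ × ℤ := (f.1 + f.2.1 + f.2.2, f.2.1, f.2.2 + 2 * f.2.1)

/-- A form lies in the region `H⁰` (first coefficient positive, second negative). -/
def inH0 (f : ℤ × ℤ × ℤ) : Prop := 0 < f.1 ∧ f.2.1 < 0

theorem isSquare_discr_of_add_add_eq_zero {m n k : ℤ} (h : m + n + k = 0) :
    IsSquare (k ^ 2 - 4 * m * n) :=
  ⟨m - n, by rw [eq_neg_of_add_eq_zero_right h]; ring⟩

theorem inH0_opA_iff {m n k : ℤ} (hm : 0 < m) : inH0 (opA (m, n, k)) ↔ m + n + k < 0 :=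
  and_iff_right hm

theorem inH0_opB_iff {m n k : ℤ} (hn : n < 0) : inH0 (opB (m, n, k)) ↔ 0 < m + n + k :=
  and_iff_left hn

/-- Let `f = (m,n,k)` with `m > 0`, `n < 0` and non-square discriminant. Then
`m + n + k ≠ 0`, `A f ∈ H⁰ ↔ m + n + k < 0`, `B f ∈ H⁰ ↔ m + n + k > 0`, and
exactly one of `A f`, `B f` lies in `H⁰`. -/
theorem exactly_one_of_A_B_stays (m n k : ℤ) (hm : 0 < m) (hn : n < 0)
    (hns : ¬ IsSquare (k ^ 2 - 4 * m * n)) :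
    m + n + k ≠ 0 ∧
    (inH0 (opA (m, n, k)) ↔ m + n + k < 0) ∧
    (inH0 (opB (m, n, k)) ↔ 0 < m + n + k) ∧
    Xor' (inH0 (opA (m, n, k))) (inH0 (opB (m, n, k))) := by
  have hne : m + n + k ≠ 0 := fun h => hns (isSquare_discr_of_add_add_eq_zero h)
  rw [inH0_opA_iff hm, inH0_opB_iff hn]
  refine ⟨hne, Iff.rfl, Iff.rfl, ?_⟩
  rcases hne.lt_or_gt with hneg | hpos
  · exact Or.inl ⟨hneg, hneg.asymm⟩
  · exact Or.inr ⟨hpos, hpos.asymm⟩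
end

section
/- For Δ = ρ² a perfect square (ρ a positive integer), the ρ forms with (K, D, S) = (ρ, r, r) for r = 0, 1, ..., ρ-1, i.e., the forms (m, n, k) = (r, 0, ρ), lie in pairwise distinct SL(2,ℤ)-orbits. -/
def formVal (f : ℤ × ℤ × ℤ) (x y : ℤ) : ℤ :=
  f.1 * x ^ 2 + f.2.1 * y ^ 2 + f.2.2 * x * y

def inOrbit (f g : ℤ × ℤ × ℤ) : Prop :=
  ∃ a b c d : ℤ, a * d - b * c = 1 ∧
    ∀ x y : ℤ, formVal g x y = formVal f (a * x + b * y) (c * x + d * y)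

/-!
The form `(r, 0, ρ)` factors as `x (r x + ρ y)`, and `(0, 1)` is a zero of `(s, 0, ρ)`. A matrix
`[[a, b], [c, d]]` carrying one form to the other must therefore send `(0, 1)` onto a zero `(b, d)`
of `x (r x + ρ y)`. If `r b + ρ d = 0`, comparing values at `(1, 1)` and `(1, 0)` forces `ρ = -ρ`;
so `b = 0`, `a = ±1`, and the value at `(1, 0)` reads `s = r + ρ a c`, i.e. `r ≡ s [ZMOD ρ]`.
-/

theorem formVal_linearFactor (r ρ x y : ℤ) : formVal (r, 0, ρ) x y = x * (r * x + ρ * y) := by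
  simp only [formVal]
  ring

theorem upperRight_eq_zero_of_transforms_linearFactor {r s ρ a b c d : ℤ} (hρ : ρ ≠ 0)
    (hdet : a * d - b * c = 1)
    (hE : ∀ x y : ℤ, formVal (s, 0, ρ) x y = formVal (r, 0, ρ) (a * x + b * y) (c * x + d * y)) :
    b = 0 := by
  simp only [formVal_linearFactor] at hE
  have h10 := hE 1 0
  have h01 := hE 0 1
  have h11 := hE 1 1
  have hzero : b * (r * b + ρ * d) = 0 := by linarith
  refine (mul_eq_zero.mp hzero).resolve_right fun hk => hρ ?_
  have h2ρ : 2 * ρ = 0 := by linear_combination h11 - h10 - h01 + 2 * a * hk - ρ * hdet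
  omega

theorem modEq_of_inOrbit_linearFactor {r s ρ : ℤ} (hρ : ρ ≠ 0)
    (h : inOrbit (r, 0, ρ) (s, 0, ρ)) : r ≡ s [ZMOD ρ] := by
  obtain ⟨a, b, c, d, hdet, hE⟩ := h
  obtain rfl : b = 0 := upperRight_eq_zero_of_transforms_linearFactor hρ hdet hE
  have ha : a = 1 ∨ a = -1 := Int.isUnit_iff.mp (.of_mul_eq_one d (by linarith))
  have h10 := hE 1 0
  simp only [formVal_linearFactor] at h10
  refine Int.modEq_iff_dvd.mpr ⟨a * c, ?_⟩
  rcases ha with rfl | rfl <;> linarith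

theorem square_discriminant_orbit_representatives_distinct_general
    (ρ : ℤ) (r s : ℤ)
    (hr0 : 0 ≤ r) (hr : r < ρ) (hs0 : 0 ≤ s) (hs : s < ρ)
    (h : inOrbit (r, 0, ρ) (s, 0, ρ)) : r = s := by
  have hmod : r % ρ = s % ρ := modEq_of_inOrbit_linearFactor (by omega) h
  rwa [Int.emod_eq_of_lt hr0 hr, Int.emod_eq_of_lt hs0 hs] at hmod

/-- For `Δ = ρ²` a perfect square, the `ρ` forms `(m,n,k) = (r, 0, ρ)` (i.e.
`(K,D,S) = (ρ, r, r)`) for `r = 0, 1, …, ρ - 1` lie in pairwise distinct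
`SL(2,ℤ)`-orbits. -/
theorem square_discriminant_orbit_representatives_distinct
    (ρ : ℤ) (hρ : 0 < ρ) (r s : ℤ)
    (hr0 : 0 ≤ r) (hr : r < ρ) (hs0 : 0 ≤ s) (hs : s < ρ)
    (h : inOrbit (r, 0, ρ) (s, 0, ρ)) : r = s :=
  square_discriminant_orbit_representatives_distinct_general ρ r s hr0 hr hs0 hs h
end
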